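/- Let 0 < q < 1, μ > 0 with 0 < (1-q)μ < 1, and ρ(s) = C_q ((1-q)μ)^s/(q;q)_s with C_q = 1/e_q[(1-q)μ], where e_q(z) = ∑_{n≥0} z^n/(q;q)_n. Then the k-th q-moment u_k^q = ∑_{s≥0} [s]_q^(k) ρ(s) (x(s+1/2) - x(s-1/2)) equals (qμ)^k q^{-1/2} e_q[(1-q)qμ]/e_q[(1-q)μ] for every k ≥ 0. -/

import Mathlib

/-- The lattice `x(s) = (q^s - 1)/(q - 1)`. -/
noncomputable def qlat (q s : ℝ) : ℝ := (q ^ s - 1) / (q - 1)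

/-- The q-falling factorial `[s]_q^(k) = ∏_{j=0}^{k-1} x(s - j)`. -/
noncomputable def qfall (q s : ℝ) (k : ℕ) : ℝ := ∏ j ∈ Finset.range k, qlat q (s - j)

/-- The q-Pochhammer symbol `(a;q)_k`. -/
noncomputable def qPoch (a q : ℝ) (k : ℕ) : ℝ := ∏ j ∈ Finset.range k, (1 - a * q ^ j)

/-- The q-exponential `e_q(z) = ∑_{n ≥ 0} z^n/(q;q)_n`. -/
noncomputable def qExp (q z : ℝ) : ℝ := ∑' n : ℕ, z ^ n / qPoch q q n

/-!
Since `(1 - q) x(m) = 1 - q^m`, the q-falling factorial telescopes against the q-Pochhammer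
symbol: `[n + k]_q^(k) (1 - q)^k (q;q)_n = (q;q)_{n+k}`, while `[s]_q^(k) = 0` for `s < k`.
Hence `∑_s [s]_q^(k) ((1-q)c)^s/(q;q)_s = c^k e_q[(1-q)c]`, the q-analogue of
`∑_s s(s-1)⋯(s-k+1) z^s/s! = z^k e^z`. The lattice step is `x(s+1/2) - x(s-1/2) = q^(s-1/2)`,
and the factor `q^s` it contributes turns `(1-q)μ` into `(1-q)qμ`.
-/

lemma qPoch_succ (a q : ℝ) (n : ℕ) : qPoch a q (n + 1) = qPoch a q n * (1 - a * q ^ n) :=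
  Finset.prod_range_succ _ _

lemma qPoch_self_pos {q : ℝ} (hq : 0 ≤ q) (hq1 : q < 1) (n : ℕ) : 0 < qPoch q q n := by
  refine Finset.prod_pos fun j _ => ?_
  have : q ^ j ≤ 1 := pow_le_one₀ hq hq1.le
  nlinarith

lemma qlat_natCast (q : ℝ) (m : ℕ) : qlat q m = (q ^ m - 1) / (q - 1) := by
  rw [qlat, Real.rpow_natCast]

lemma qfall_natCast_of_lt (q : ℝ) {s k : ℕ} (h : s < k) : qfall q s k = 0 :=
  Finset.prod_eq_zero (Finset.mem_range.mpr h) (by simp [qlat])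

lemma qfall_natCast_add_succ (q : ℝ) (n k : ℕ) :
    qfall q ↑(n + (k + 1)) (k + 1) = qfall q ↑(n + k) k * qlat q ↑(n + k + 1) := by
  rw [qfall, Finset.prod_range_succ']
  congr 1
  · exact Finset.prod_congr rfl fun j _ => by push_cast; ring_nf
  · push_cast; ring_nf

lemma one_sub_mul_qlat_natCast {q : ℝ} (hq1 : q ≠ 1) (m : ℕ) :
    (1 - q) * qlat q m = 1 - q ^ m := by
  rw [qlat_natCast]
  field_simp [sub_ne_zero.mpr hq1]
  ring

lemma qfall_natCast_add_mul_qPoch {q : ℝ} (hq1 : q ≠ 1) (n k : ℕ) :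
    qfall q ↑(n + k) k * ((1 - q) ^ k * qPoch q q n) = qPoch q q (n + k) := by
  induction k with
  | zero => simp [qfall]
  | succ k ih =>
    rw [qfall_natCast_add_succ, ← add_assoc, qPoch_succ, ← ih, ← pow_succ',
      ← one_sub_mul_qlat_natCast hq1]
    ring

lemma summable_qExp {q : ℝ} (hq : 0 ≤ q) (hq1 : q < 1) {z : ℝ} (hz : |z| < 1) :
    Summable fun n : ℕ => z ^ n / qPoch q q n := by
  refine summable_of_ratio_norm_eventually_le (r := (|z| + 1) / 2) (by linarith) ?_
  have hsmall : ∀ᶠ n : ℕ in Filter.atTop, q ^ n ≤ (1 - |z|) / 2 :=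
    (tendsto_pow_atTop_nhds_zero_of_lt_one hq hq1).eventually
      (eventually_le_nhds (by linarith))
  filter_upwards [hsmall] with n hn
  have hP := qPoch_self_pos hq hq1 n
  have hP1 := qPoch_self_pos hq hq1 (n + 1)
  have hqn : q * q ^ n ≤ (1 - |z|) / 2 := by nlinarith [pow_nonneg hq n]
  -- the ratio of consecutive terms is `|z| / (1 - q^(n+1)) ≤ (|z| + 1)/2` once `q^n` is small
  have hratio : |z| ≤ (|z| + 1) / 2 * (1 - q * q ^ n) := by
    nlinarith [abs_nonneg z, sq_nonneg (1 - |z|)]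
  simp only [norm_div, norm_pow, Real.norm_eq_abs, abs_of_pos hP, abs_of_pos hP1]
  rw [qPoch_succ] at hP1 ⊢
  rw [pow_succ, div_le_iff₀ hP1]
  calc |z| ^ n * |z| ≤ |z| ^ n * ((|z| + 1) / 2 * (1 - q * q ^ n)) :=
        mul_le_mul_of_nonneg_left hratio (by positivity)
    _ = (|z| + 1) / 2 * (|z| ^ n / qPoch q q n) * (qPoch q q n * (1 - q * q ^ n)) := by
        field_simp

lemma qfall_natCast_add_mul_pow_div_qPoch {q : ℝ} (hq : 0 ≤ q) (hq1 : q < 1) (c : ℝ)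
    (n k : ℕ) :
    qfall q ↑(n + k) k * ((1 - q) * c) ^ (n + k) / qPoch q q (n + k) =
      c ^ k * (((1 - q) * c) ^ n / qPoch q q n) := by
  have h1q : 1 - q ≠ 0 := by linarith
  have hPn := (qPoch_self_pos hq hq1 n).ne'
  have hPnk := (qPoch_self_pos hq hq1 (n + k)).ne'
  rw [eq_div_of_mul_eq (by positivity) (qfall_natCast_add_mul_qPoch hq1.ne n k), pow_add,
    mul_pow (1 - q) c k]
  field_simp

theorem hasSum_qfall_mul_pow_div_qPoch {q : ℝ} (hq : 0 ≤ q) (hq1 : q < 1) {c : ℝ}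
    (hc : |(1 - q) * c| < 1) (k : ℕ) :
    HasSum (fun s : ℕ => qfall q s k * ((1 - q) * c) ^ s / qPoch q q s)
      (c ^ k * qExp q ((1 - q) * c)) := by
  rw [← hasSum_nat_add_iff' k, Finset.sum_eq_zero fun s hs => by
    rw [qfall_natCast_of_lt q (Finset.mem_range.mp hs), zero_mul, zero_div], sub_zero]
  simp_rw [qfall_natCast_add_mul_pow_div_qPoch hq hq1]
  exact (summable_qExp hq hq1 hc).hasSum.mul_left _

lemma qlat_natCast_add_half_sub_qlat_sub_half {q : ℝ} (hq : 0 < q) (hq1 : q ≠ 1) (s : ℕ) :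
    qlat q ((s : ℝ) + 1 / 2) - qlat q ((s : ℝ) - 1 / 2) = q ^ s * q ^ (-(1 : ℝ) / 2) := by
  have hlow : q ^ ((s : ℝ) - 1 / 2) = q ^ s * q ^ (-(1 : ℝ) / 2) := by
    rw [← Real.rpow_natCast q s, ← Real.rpow_add hq]
    ring_nf
  have hhigh : q ^ ((s : ℝ) + 1 / 2) = q ^ ((s : ℝ) - 1 / 2) * q := by
    rw [← Real.rpow_add_one hq.ne']
    ring_nf
  rw [qlat, qlat, div_sub_div_same, hhigh, hlow]
  field_simp [sub_ne_zero.mpr hq1]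
  ring

theorem qCharlier_moments_general (q μ : ℝ) (hq : 0 < q) (hq1 : q < 1)
    (h1 : 0 < (1 - q) * μ) (h2 : (1 - q) * μ < 1) (k : ℕ) :
    ∑' s : ℕ,
        qfall q s k *
          (1 / qExp q ((1 - q) * μ) * ((1 - q) * μ) ^ s / qPoch q q s) *
          (qlat q ((s : ℝ) + 1 / 2) - qlat q ((s : ℝ) - 1 / 2)) =
      (q * μ) ^ k * q ^ (-(1 : ℝ) / 2) * qExp q ((1 - q) * (q * μ)) /
        qExp q ((1 - q) * μ) := by
  have hterm : ∀ s : ℕ,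
      qfall q s k * (1 / qExp q ((1 - q) * μ) * ((1 - q) * μ) ^ s / qPoch q q s) *
          (qlat q ((s : ℝ) + 1 / 2) - qlat q ((s : ℝ) - 1 / 2)) =
        q ^ (-(1 : ℝ) / 2) / qExp q ((1 - q) * μ) *
          (qfall q s k * ((1 - q) * (q * μ)) ^ s / qPoch q q s) := by
    intro s
    have hpow : ((1 - q) * (q * μ)) ^ s = ((1 - q) * μ) ^ s * q ^ s := by
      rw [← mul_pow]; ring_nf
    rw [qlat_natCast_add_half_sub_qlat_sub_half hq hq1.ne, hpow]
    ring
  have hB : |(1 - q) * (q * μ)| < 1 := by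
    rw [abs_of_pos (by nlinarith)]
    nlinarith
  rw [tsum_congr hterm, tsum_mul_left, (hasSum_qfall_mul_pow_div_qPoch hq.le hq1 hB k).tsum_eq]
  ring

/-- q-Charlier moments: with `ρ(s) = C_q ((1-q)μ)^s/(q;q)_s`, `C_q = 1/e_q[(1-q)μ]`,
the `k`-th q-moment equals `(qμ)^k q^{-1/2} e_q[(1-q)qμ]/e_q[(1-q)μ]`. -/
theorem qCharlier_moments (q μ : ℝ) (hq : 0 < q) (hq1 : q < 1) (hμ : 0 < μ)
    (h1 : 0 < (1 - q) * μ) (h2 : (1 - q) * μ < 1) (k : ℕ) :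
    ∑' s : ℕ,
        qfall q s k *
          (1 / qExp q ((1 - q) * μ) * ((1 - q) * μ) ^ s / qPoch q q s) *
          (qlat q ((s : ℝ) + 1 / 2) - qlat q ((s : ℝ) - 1 / 2)) =
      (q * μ) ^ k * q ^ (-(1 : ℝ) / 2) * qExp q ((1 - q) * (q * μ)) /
        qExp q ((1 - q) * μ) :=
  qCharlier_moments_general q μ hq hq1 h1 h2 k
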